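/- Let h ≠ h∞ be a hole, and suppose there is a cycle C* in 𝒞* other than C*_0 that either strictly encloses h* or passes through h*. Then the unique edge of the cotree T* that exits Vor*(v) at C* lies on the path from h∞* to h* in T*. -/

import Mathlib

open scoped Classical

/-- A finite connected directed planar embedded multigraph, presented by a rotation system
(darts with reversal and a counterclockwise rotation around each vertex), together with its
faces and Euler's formula (which forces the embedding to be planar). Every arc has an
antiparallel reverse arc embedded on the same curve. -/
structure PlanarGraph where
  /-- vertices -/
  V : Type
  /-- arcs (darts) -/
  A : Type
  /-- faces -/
  F : Type
  fintypeV : Fintype V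
  fintypeA : Fintype A
  fintypeF : Fintype F
  decV : DecidableEq V
  decA : DecidableEq A
  decF : DecidableEq F
  tail : A → V
  head : A → V
  /-- arc reversal -/
  rev : A → A
  rev_rev : ∀ a, rev (rev a) = a
  rev_ne : ∀ a, rev a ≠ a
  tail_rev : ∀ a, tail (rev a) = head a
  /-- rotation: the next arc, counterclockwise, among the arcs with the same tail -/
  rot : Equiv.Perm A
  tail_rot : ∀ a, tail (rot a) = tail a
  /-- the face lying to the left of an arc -/
  left : A → F
  /-- along the boundary walk of a face, the arc following `a` is `rot (rev a)` -/
  left_faceNext : ∀ a, left (rot (rev a)) = left a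
  /-- the boundary of each face is a single orbit of the face-walk -/
  face_orbit : ∀ a b, left a = left b → ∃ n : ℕ, (fun x => rot (rev x))^[n] a = b
  left_surjective : Function.Surjective left
  /-- the graph is connected -/
  connected : ∀ u w : V, Relation.ReflTransGen (fun x y => ∃ a, tail a = x ∧ head a = y) u w
  /-- Euler's formula `|V| - |E| + |F| = 2` (where `|E| = |A|/2`): the embedding is planar -/
  euler : 2 * @Fintype.card V fintypeV + 2 * @Fintype.card F fintypeF
            = @Fintype.card A fintypeA + 4

attribute [instance] PlanarGraph.fintypeV PlanarGraph.fintypeA PlanarGraph.fintypeF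
attribute [instance] PlanarGraph.decV PlanarGraph.decA PlanarGraph.decF

namespace PlanarGraph

variable (G : PlanarGraph)

/-- the face to the right of an arc -/
def right (a : G.A) : G.F := G.left (G.rev a)

/-- the tail of the dual arc `a*`: the face to the left of `a` -/
def dualTail (a : G.A) : G.F := G.left a

/-- the head of the dual arc `a*`: the face to the right of `a` -/
def dualHead (a : G.A) : G.F := G.right a

/-- a vertex is incident to a face -/
def Incident (w : G.V) (f : G.F) : Prop := ∃ a, G.tail a = w ∧ G.left a = f

/-- the dual arc `a*` is incident to the dual vertex (face) `φ` -/
def DualIncident (a : G.A) (φ : G.F) : Prop := G.dualTail a = φ ∨ G.dualHead a = φ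

/-- `IsWalk p u w`: the list of arcs `p` forms a walk from `u` to `w` in `G` -/
def IsWalk : List G.A → G.V → G.V → Prop
  | [], u, w => u = w
  | a :: p, u, w => G.tail a = u ∧ IsWalk p (G.head a) w

/-- the vertices visited by a walk starting at `u` -/
def walkVertices (p : List G.A) (u : G.V) : List G.V := u :: p.map G.head

/-- `IsDualWalk s p φ ψ`: the arcs of `p` lie in `s` and their duals form a walk from the
face `φ` to the face `ψ` in the dual graph `P*` -/
def IsDualWalk (s : Set G.A) : List G.A → G.F → G.F → Prop
  | [], φ, ψ => φ = ψ
  | a :: p, φ, ψ => a ∈ s ∧ G.dualTail a = φ ∧ IsDualWalk s p (G.dualHead a) ψ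

/-- the length of a walk with respect to the arc lengths `len` -/
def walkLen (len : G.A → ℝ) (p : List G.A) : ℝ := (p.map len).sum

/-- `d` is the shortest-path distance of `G` with respect to the arc lengths `len` -/
def IsSPDist (len : G.A → ℝ) (d : G.V → G.V → ℝ) : Prop :=
  ∀ u w : G.V, (∃ p, G.IsWalk p u w ∧ G.walkLen len p = d u w) ∧
    ∀ p, G.IsWalk p u w → d u w ≤ G.walkLen len p

/-- there are no negative-length cycles -/
def NoNegCycle (len : G.A → ℝ) : Prop :=
  ∀ (u : G.V) (p : List G.A), G.IsWalk p u u → 0 ≤ G.walkLen len p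

/-- shortest paths are unique -/
def UniqueShortestPaths (len : G.A → ℝ) (d : G.V → G.V → ℝ) : Prop :=
  ∀ (u w : G.V) (p q : List G.A), G.IsWalk p u w → G.IsWalk q u w →
    G.walkLen len p = d u w → G.walkLen len q = d u w → p = q

/-- vertex-to-vertex distances are pairwise distinct -/
def GenericDistances (d : G.V → G.V → ℝ) : Prop :=
  ∀ u w u' w' : G.V, u ≠ w → u' ≠ w' → d u w = d u' w' → u = u' ∧ w = w'

/-- the additively weighted Voronoi cell of a site `u` among the sites `S`:
the vertices strictly closer (in additively weighted distance) to `u` than to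
any other site of `S` -/
def VorCell (d : G.V → G.V → ℝ) (S : Set G.V) (ω : G.V → ℝ) (u : G.V) : Set G.V :=
  {w | u ∈ S ∧ ∀ u' ∈ S, u' ≠ u → ω u + d u w < ω u' + d u' w}

/-- the bisector `β*(u,v)` (as a set of (duals of) arcs): duals of the arcs whose tail is
closer to `u` and whose head is closer to `v` in the two-site diagram `VD({u,v},ω)` -/
def bisector (d : G.V → G.V → ℝ) (u v : G.V) (ωu ωv : ℝ) : Set G.A :=
  {a | ωu + d u (G.tail a) < ωv + d v (G.tail a) ∧
       ωv + d v (G.head a) < ωu + d u (G.head a)}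

/-- `s` is a simple cycle in the dual graph `P*` -/
def IsSimpleDualCycle (s : Set G.A) : Prop :=
  s.Nonempty ∧
  Set.InjOn G.dualTail s ∧
  Set.InjOn G.dualHead s ∧
  (∀ a ∈ s, ∃ b ∈ s, G.dualTail b = G.dualHead a) ∧
  (∀ a ∈ s, ∃ b ∈ s, G.dualHead b = G.dualTail a) ∧
  ∀ a ∈ s, ∀ b ∈ s,
    Relation.ReflTransGen (fun x y => x ∈ s ∧ y ∈ s ∧ G.dualHead x = G.dualTail y) a b

/-- `t` is (the arc set of) a contiguous segment of the dual cycle `s` -/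
def IsSegmentOf (t s : Set G.A) : Prop :=
  t ⊆ s ∧ ∃ (f : ℕ → G.A) (n : ℕ),
    (∀ k < n, f k ∈ s) ∧
    (∀ k, k + 1 < n → G.dualHead (f k) = G.dualTail (f (k + 1))) ∧
    t = {a | ∃ k < n, f k = a}

/-- `f` enumerates the arc set `s` as a (simple) closed walk of length `n` in the dual graph -/
def IsCyclicEnum (s : Set G.A) (f : ℕ → G.A) (n : ℕ) : Prop :=
  0 < n ∧ (∀ k < n, f k ∈ s) ∧ (∀ a ∈ s, ∃ k < n, f k = a) ∧
  (∀ k l, k < n → l < n → f k = f l → k = l) ∧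
  (∀ k, k + 1 < n → G.dualHead (f k) = G.dualTail (f (k + 1))) ∧
  G.dualHead (f (n - 1)) = G.dualTail (f 0)

/-- all faces of `G` except the holes are triangles -/
def Triangulated (Holes : Set G.F) : Prop :=
  ∀ f, f ∉ Holes → Set.ncard {a : G.A | G.left a = f} = 3

/-- the cell of the site `s₁` in the additively weighted Voronoi diagram of the three
sites `s₁, s₂, s₃` with respective weights `w₁, w₂, w₃` -/
def cell3 (d : G.V → G.V → ℝ) (s₁ s₂ s₃ : G.V) (w₁ w₂ w₃ : ℝ) : Set G.V :=
  {w | w₁ + d s₁ w < w₂ + d s₂ w ∧ w₁ + d s₁ w < w₃ + d s₃ w}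

/-- `f` is a trichromatic face of `VD_x`, the Voronoi diagram of the sites `r, g, b` with
respective weights `x, ωg, ωb`: it is incident to a vertex of each of the three cells -/
def Trichromatic3 (d : G.V → G.V → ℝ) (r g b : G.V) (x ωg ωb : ℝ) (f : G.F) : Prop :=
  (∃ p ∈ G.cell3 d r g b x ωg ωb, G.Incident p f) ∧
  (∃ p ∈ G.cell3 d g r b ωg x ωb, G.Incident p f) ∧
  (∃ p ∈ G.cell3 d b r g ωb x ωg, G.Incident p f)

/-- `δ̃^{rc}(w) = ω(c) + d(c,w) - d(r,w)` and `Δ^r(w) = min (δ̃^{rg}(w)) (δ̃^{rb}(w))`: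
the largest weight that can be assigned to `r` so that `w` is in the cell of `r` -/
def DeltaVertex (d : G.V → G.V → ℝ) (r g b : G.V) (ωg ωb : ℝ) (w : G.V) : ℝ :=
  min (ωg + d g w - d r w) (ωb + d b w - d r w)

/-- `Δ^r` of an arc: the maximum of `Δ^r` over its two endpoints (also the value
attached to the dual arc) -/
def DeltaArc (d : G.V → G.V → ℝ) (r g b : G.V) (ωg ωb : ℝ) (a : G.A) : ℝ :=
  max (G.DeltaVertex d r g b ωg ωb (G.tail a)) (G.DeltaVertex d r g b ωg ωb (G.head a))

/-- `T` is (the arc set of) the shortest-path tree of `G` rooted at `c`,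
oriented away from the root -/
def IsSPTree (len : G.A → ℝ) (d : G.V → G.V → ℝ) (c : G.V) (T : Set G.A) : Prop :=
  (∀ a ∈ T, d c (G.head a) = d c (G.tail a) + len a) ∧
  (∀ a ∈ T, G.rev a ∉ T) ∧
  (∀ w : G.V, w ≠ c → ∃! a, a ∈ T ∧ G.head a = w) ∧
  (∀ a ∈ T, G.head a ≠ c)

/-- the number of edges on the path between two dual vertices in the cotree of `T`
(the spanning tree of the dual formed by the duals of the edges not in `T`) -/
noncomputable def cotreeDist (T : Set G.A) (φ ψ : G.F) : ℕ :=
  sInf {n : ℕ | ∃ p : List G.A,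
    G.IsDualWalk {a : G.A | a ∉ T ∧ G.rev a ∉ T} p φ ψ ∧ p.length = n}

/-- the dart scanned after `a` in a counterclockwise-first depth-first traversal of the
spanning tree `T`: tree darts are traversed and the scan resumes counterclockwise after the
reverse dart; non-tree darts are skipped -/
noncomputable def dfsNext (T : Set G.A) (a : G.A) : G.A :=
  if a ∈ T ∨ G.rev a ∈ T then G.rot (G.rev a) else G.rot a

/-- `pre` is the preorder labeling of all arcs of `G` (equivalently, of the artificial
leaves `x_{uv}` attached immediately before each arc `uv`) induced by a
counterclockwise-first depth-first search of the tree `T` rooted at `c`,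
started from the dart `a₀` -/
def IsCCWPreorder (T : Set G.A) (c : G.V) (a₀ : G.A) (pre : G.A → ℕ) : Prop :=
  G.tail a₀ = c ∧ pre a₀ = 0 ∧ Function.Injective pre ∧
  (∀ a : G.A, pre a < Fintype.card G.A) ∧
  ∀ a : G.A, (G.dfsNext T)^[pre a] a₀ = a

/-- the successor of an arc in the boundary walk of the face to its left -/
def faceNext (a : G.A) : G.A := G.rot (G.rev a)

/-- the number of face-walk steps from the arc `a` to the arc `b` (both on the boundary of
the same face), i.e. the position of `b` in the boundary walk of the face starting at `a` -/
noncomputable def faceIdx (a b : G.A) : ℕ :=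
  if h : ∃ k : ℕ, (G.faceNext)^[k] a = b then Nat.find h else 0

/-- the sets of vertices `S` and `S'` are separated along the boundary of the face `h`:
going around `h` starting from some boundary arc, all occurrences of vertices of `S`
come before all occurrences of vertices of `S'` -/
def SeparatedAlong (h : G.F) (S S' : Set G.V) : Prop :=
  ∃ a₀, G.left a₀ = h ∧ ∃ m : ℕ,
    (∀ b, G.left b = h → G.tail b ∈ S → G.faceIdx a₀ b < m) ∧
    (∀ b, G.left b = h → G.tail b ∈ S' → m ≤ G.faceIdx a₀ b)

/-- the bisector `β*(S₁,S₂)`: duals of arcs whose tail lies in the cell of a site of `S₁`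
and whose head lies in the cell of a site of `S₂`, in the diagram `VD(S₁ ∪ S₂, ω)` -/
def groupBisector (d : G.V → G.V → ℝ) (S₁ S₂ : Set G.V) (ω : G.V → ℝ) : Set G.A :=
  {a : G.A | (∃ s ∈ S₁, G.tail a ∈ G.VorCell d (S₁ ∪ S₂) ω s) ∧
             (∃ s ∈ S₂, G.head a ∈ G.VorCell d (S₁ ∪ S₂) ω s)}

/-- `z` lies strictly between `x` and `y` in the boundary walk of their common face -/
def StrictBetween (x y z : G.A) : Prop :=
  0 < G.faceIdx x z ∧ G.faceIdx x z < G.faceIdx x y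

/-- the closed dual walk enumerated by `f` (cyclically, of length `n`) is non-self-crossing:
at every dual vertex visited more than once, the passages through it do not interleave in
the rotation around that dual vertex -/
def EnumNonSelfCrossing (f : ℕ → G.A) (n : ℕ) : Prop :=
  ∀ i j, i < n → j < n → i ≠ j →
    G.dualHead (f i) = G.dualHead (f j) →
    (G.StrictBetween (G.rev (f i)) (f ((i + 1) % n)) (G.rev (f j)) ↔
     G.StrictBetween (G.rev (f i)) (f ((i + 1) % n)) (f ((j + 1) % n)))

/-- a face of `G` belongs to a set `Vor` of vertices if all its incident vertices do -/
def FaceBelongs (Vor : Set G.V) (f : G.F) : Prop := ∀ w : G.V, G.Incident w f → w ∈ Vor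

/-- the dual arc `a* = f*g*` penetrates `Vor*` at the cycle `C`: the face `f` does not
belong to `Vor`, the face `g` does, and `f*` is a vertex of `C` -/
def PenetratesAt (Vor : Set G.V) (C : Set G.A) (a : G.A) : Prop :=
  ¬ G.FaceBelongs Vor (G.dualTail a) ∧ G.FaceBelongs Vor (G.dualHead a) ∧
  ∃ b ∈ C, G.DualIncident b (G.dualTail a)

/-- the dual arc `a* = f*g*` exits `Vor*` at the cycle `C`: the reversed arc `g*f*`
penetrates at `C` -/
def ExitsAt (Vor : Set G.V) (C : Set G.A) (a : G.A) : Prop :=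
  G.FaceBelongs Vor (G.dualTail a) ∧ ¬ G.FaceBelongs Vor (G.dualHead a) ∧
  ∃ b ∈ C, G.DualIncident b (G.dualHead a)

/-- `K` is a connected component of the complement of the vertex set `Vor` -/
def IsCompOfComplement (Vor K : Set G.V) : Prop :=
  ∃ x, x ∉ Vor ∧ K = {y | Relation.ReflTransGen
    (fun p q => p ∉ Vor ∧ q ∉ Vor ∧ ∃ a : G.A, G.tail a = p ∧ G.head a = q) x y}

/-- the boundary cycle of `Vor*` separating `Vor` from the complement component `K` -/
def boundaryCycle (Vor K : Set G.V) : Set G.A :=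
  {a : G.A | G.tail a ∈ Vor ∧ G.head a ∈ K}

/-- the set `𝒞*` of boundary cycles of `Vor*` -/
def boundaryCycles (Vor : Set G.V) : Set (Set G.A) :=
  {C | ∃ K : Set G.V, G.IsCompOfComplement Vor K ∧ C = G.boundaryCycle Vor K}

/-- `Tstar` is the cotree of the (primal) spanning tree `T`, i.e. the spanning tree of the
dual formed by the duals of the edges of `G` not in `T`, oriented away from `root` -/
def IsCotree (T Tstar : Set G.A) (root : G.F) : Prop :=
  (∀ a ∈ Tstar, a ∉ T ∧ G.rev a ∉ T) ∧
  (∀ a ∈ Tstar, G.rev a ∉ Tstar) ∧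
  (∀ a : G.A, a ∉ T → G.rev a ∉ T → (a ∈ Tstar ∨ G.rev a ∈ Tstar)) ∧
  (∀ φ : G.F, φ ≠ root → ∃! a, a ∈ Tstar ∧ G.dualHead a = φ) ∧
  (∀ a ∈ Tstar, G.dualHead a ≠ root) ∧
  (∀ φ : G.F, ∃ p : List G.A, G.IsDualWalk Tstar p root φ)

end PlanarGraph

/-!
Let `X` be the set of faces below the exiting arc `a` in the cotree `T*`; we show `h ∈ X`.
Flow conservation around subtrees of `T` shows that the dual arcs crossing the boundary of `X` are
`a` and tree arcs on its fundamental cycle, so each has its ends on tree paths to the ends of `a`.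
Tree paths to vertices of `Vor(v)` stay in `Vor(v)`, and the ends of `a` lie on a face of
`Vor(v)`, so no crossing arc touches the component `K` of the complement. Euler's formula, through
the genus inequality, makes the darts around every vertex a single rotation cycle; hence all faces
around a vertex of `K`, and then all faces incident to `K`, lie on the same side of `X`. One of
them is the head face of `a`, which is in `X`, and another is `h`.
-/

namespace Setoid

variable {α : Type*}

def glue (r : Setoid α) (x y : α) : Setoid α where
  r a b := r a b ∨ (r a x ∧ r y b) ∨ (r a y ∧ r x b)
  iseqv := by
    refine ⟨fun a => Or.inl (r.refl' a), ?_, ?_⟩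
    · rintro a b (h | ⟨h₁, h₂⟩ | ⟨h₁, h₂⟩)
      · exact Or.inl (r.symm' h)
      · exact Or.inr (Or.inr ⟨r.symm' h₂, r.symm' h₁⟩)
      · exact Or.inr (Or.inl ⟨r.symm' h₂, r.symm' h₁⟩)
    · rintro a b c (h | h | h) (h' | h' | h') <;> grind [r.trans', r.symm']

variable {r s : Setoid α} {x y : α}

theorem le_glue : r ≤ r.glue x y := fun _ _ => Or.inl

theorem glue_rel : r.glue x y x y := Or.inr (Or.inl ⟨r.refl' x, r.refl' y⟩)

theorem glue_le_iff : r.glue x y ≤ s ↔ r ≤ s ∧ s x y := by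
  refine ⟨fun h => ⟨le_glue.trans h, h glue_rel⟩, fun ⟨hrs, hxy⟩ a b hab => ?_⟩
  rcases hab with h | ⟨h₁, h₂⟩ | ⟨h₁, h₂⟩
  · exact hrs h
  · exact s.trans' (s.trans' (hrs h₁) hxy) (hrs h₂)
  · exact s.trans' (s.trans' (hrs h₁) (s.symm' hxy)) (hrs h₂)

theorem glue_eq_self (h : r x y) : r.glue x y = r :=
  le_antisymm (glue_le_iff.2 ⟨le_rfl, h⟩) le_glue

theorem sup_glue : s ⊔ r.glue x y = (s ⊔ r).glue x y :=
  le_antisymm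
    (sup_le (le_sup_left.trans le_glue) (glue_le_iff.2 ⟨le_sup_right.trans le_glue, glue_rel⟩))
    (glue_le_iff.2 ⟨sup_le_sup_left le_glue s, le_sup_right (a := s) glue_rel⟩)

variable [Finite α]

theorem card_quotient_glue (h : ¬ r x y) :
    Nat.card (Quotient r) = Nat.card (Quotient (r.glue x y)) + 1 := by
  let π : Quotient r → Quotient (r.glue x y) := map_of_le le_glue
  let f : Quotient r → Option (Quotient (r.glue x y)) := fun q =>
    if q = Quotient.mk r y then none else some (π q)
  have hπ : ∀ a b, π (Quotient.mk r a) = π (Quotient.mk r b) ↔ r.glue x y a b :=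
    fun _ _ => Quotient.eq
  have hf : f.Bijective := by
    constructor
    · intro q q' hqq'
      induction q using Quotient.inductionOn with | h a => ?_
      induction q' using Quotient.inductionOn with | h b => ?_
      by_cases ha : Quotient.mk r a = Quotient.mk r y <;>
        by_cases hb : Quotient.mk r b = Quotient.mk r y <;>
        simp only [f, ha, hb, if_true, if_false, reduceCtorEq, Option.some.injEq] at hqq'
      · rw [ha, hb]
      rw [Quotient.eq] at ha hb ⊢
      rcases (hπ a b).1 hqq' with h' | ⟨-, h'⟩ | ⟨h', -⟩
      exacts [h', absurd (r.symm' h') hb, absurd h' ha]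
    · rintro (_ | q)
      · exact ⟨Quotient.mk r y, if_pos rfl⟩
      induction q using Quotient.inductionOn with | h a => ?_
      by_cases ha : Quotient.mk r a = Quotient.mk r y
      · refine ⟨Quotient.mk r x, ?_⟩
        have hx : Quotient.mk r x ≠ Quotient.mk r y := fun e => h (Quotient.eq.1 e)
        simp only [f, hx, if_false, Option.some.injEq]
        exact (hπ x a).2 (Or.inr (Or.inl ⟨r.refl' x, r.symm' (Quotient.eq.1 ha)⟩))
      · exact ⟨Quotient.mk r a, by simp only [f, ha, if_false]; rfl⟩
  rw [Nat.card_eq_of_bijective f hf, Finite.card_option]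

theorem card_quotient_le_card_quotient_glue_add_one :
    Nat.card (Quotient r) ≤ Nat.card (Quotient (r.glue x y)) + 1 := by
  by_cases h : r x y
  · rw [glue_eq_self h]; omega
  · rw [card_quotient_glue h]

theorem card_quotient_glue_le : Nat.card (Quotient (r.glue x y)) ≤ Nat.card (Quotient r) := by
  by_cases h : r x y
  · rw [glue_eq_self h]
  · rw [card_quotient_glue h]; omega

end Setoid

namespace Equiv.Perm

open Setoid

variable {α : Type*} {f g : Perm α} {x y : α}

theorem sameCycle_self_apply (f : Perm α) (z : α) : f.SameCycle z (f z) :=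
  (SameCycle.refl f z).apply_right

theorem SameCycle.setoid_le {s : Setoid α} (h : ∀ z, s z (f z)) : SameCycle.setoid f ≤ s := by
  have hinv : ∀ z, s z (f⁻¹ z) := fun z => by
    simpa using s.symm' (h (f⁻¹ z))
  rintro z _ ⟨i, rfl⟩
  induction i using Int.induction_on with
  | zero => exact s.refl' z
  | succ i ih => rw [add_comm, zpow_add, zpow_one, mul_apply]; exact s.trans' ih (h _)
  | pred i ih => rw [sub_eq_neg_add, zpow_add, zpow_neg_one, mul_apply]; exact s.trans' ih (hinv _)

theorem setoid_mul_le_sup : SameCycle.setoid (f * g) ≤ SameCycle.setoid f ⊔ SameCycle.setoid g :=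
  SameCycle.setoid_le fun z => Setoid.trans' _
    ((le_sup_right : SameCycle.setoid g ≤ _) (sameCycle_self_apply g z))
    ((le_sup_left : SameCycle.setoid f ≤ _) (sameCycle_self_apply f (g z)))

variable [DecidableEq α]

theorem setoid_mul_swap_le_glue :
    SameCycle.setoid (f * swap x y) ≤ (SameCycle.setoid f).glue x y := by
  refine SameCycle.setoid_le fun z => ?_
  rw [mul_apply]
  by_cases hzx : z = x
  · subst hzx
    rw [swap_apply_left]
    exact Or.inr (Or.inl ⟨SameCycle.refl _ _, sameCycle_self_apply f y⟩)
  by_cases hzy : z = y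
  · subst hzy
    rw [swap_apply_right]
    exact Or.inr (Or.inr ⟨SameCycle.refl _ _, sameCycle_self_apply f x⟩)
  rw [swap_apply_of_ne_of_ne hzx hzy]
  exact Or.inl (sameCycle_self_apply f z)

theorem glue_setoid_mul_swap :
    (SameCycle.setoid (f * swap x y)).glue x y = (SameCycle.setoid f).glue x y := by
  refine le_antisymm (glue_le_iff.2 ⟨setoid_mul_swap_le_glue, glue_rel⟩)
    (glue_le_iff.2 ⟨?_, glue_rel⟩)
  simpa [mul_assoc] using setoid_mul_swap_le_glue (f := f * swap x y) (x := x) (y := y)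

theorem setoid_eq_glue_setoid_mul_swap (h : f.SameCycle x y) :
    SameCycle.setoid f = (SameCycle.setoid (f * swap x y)).glue x y := by
  rw [glue_setoid_mul_swap, glue_eq_self h]

theorem sameCycle_mul_swap [Finite α] (h : ¬ f.SameCycle x y) : (f * swap x y).SameCycle x y := by
  have reach : ∀ (n : ℕ) z, ¬ f.SameCycle z x → (f ^ n) z = y → (f * swap x y).SameCycle z y := by
    intro n
    induction n with
    | zero => rintro z - rfl; rfl
    | succ n ih =>
      intro z hzx hz
      by_cases hzy : z = y
      · rw [hzy]
      have hzx' : z ≠ x := fun e => hzx (e ▸ SameCycle.refl f z)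
      have hstep : (f * swap x y) z = f z := by rw [mul_apply, swap_apply_of_ne_of_ne hzx' hzy]
      rw [pow_succ, mul_apply] at hz
      exact (hstep ▸ sameCycle_self_apply (f * swap x y) z).trans
        (ih _ (by rwa [sameCycle_apply_left]) hz)
  obtain ⟨n, -, hn⟩ := (sameCycle_self_apply f y).symm.exists_pow_eq'
  have hx : (f * swap x y) x = f y := by rw [mul_apply, swap_apply_left]
  exact (hx ▸ sameCycle_self_apply (f * swap x y) x).trans
    (reach n _ (fun e => h (e.of_apply_left.symm)) hn)

variable [Fintype α]

theorem involution_mul_swap {θ : Perm α} (hθ : θ * θ = 1) (hxy : x ≠ y) (hy : θ x = y) :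
    θ * swap x y * (θ * swap x y) = 1 ∧ (θ * swap x y).support.card + 2 = θ.support.card := by
  have hθy : θ y = x := by rw [← hy, ← mul_apply, hθ, one_apply]
  have hconj : θ * swap x y * θ = swap x y := by
    calc θ * swap x y * θ = θ * swap x y * θ⁻¹ := by rw [inv_eq_of_mul_eq_one_right hθ]
      _ = swap x y := by rw [← swap_apply_apply, hy, hθy, swap_comm]
  refine ⟨by rw [← mul_assoc, hconj, swap_mul_self], ?_⟩
  have hdisj : Disjoint (θ * swap x y) (swap x y) := by
    intro z
    by_cases hzx : z = x
    · subst hzx; left; rw [mul_apply, swap_apply_left, hθy]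
    by_cases hzy : z = y
    · subst hzy; left; rw [mul_apply, swap_apply_right, hy]
    · right; exact swap_apply_of_ne_of_ne hzx hzy
  have := hdisj.card_support_mul
  rw [mul_assoc, swap_mul_self, mul_one, card_support_swap hxy] at this
  exact this.symm

/-- For a map with vertex rotation `σ` and edge involution `θ` this says
`V - E + F ≤ 2 · #components`. -/
theorem genus_inequality (σ θ : Perm α) (hθ : θ * θ = 1) :
    2 * Nat.card (Quotient (SameCycle.setoid σ)) +
        2 * Nat.card (Quotient (SameCycle.setoid (σ * θ)))
      ≤ θ.support.card + 4 * Nat.card (Quotient (SameCycle.setoid σ ⊔ SameCycle.setoid θ)) := by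
  by_cases hθ1 : θ = 1
  · subst hθ1
    rw [mul_one, sup_eq_left.2 (SameCycle.setoid_le fun z => Setoid.refl' _ z)]
    omega
  obtain ⟨x, hx⟩ : ∃ x, θ x ≠ x := not_forall.1 fun h => hθ1 (Equiv.ext h)
  generalize hy : θ x = y at hx
  obtain ⟨hθ', hcard⟩ := involution_mul_swap hθ (Ne.symm hx) hy
  generalize hθ'def : θ * swap x y = θ' at hθ' hcard
  have hθθ' : θ = θ' * swap x y := by rw [← hθ'def, mul_assoc, swap_mul_self, mul_one]
  have ih := genus_inequality σ θ' hθ'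
  have hcomp : SameCycle.setoid σ ⊔ SameCycle.setoid θ
      = (SameCycle.setoid σ ⊔ SameCycle.setoid θ').glue x y := by
    rw [setoid_eq_glue_setoid_mul_swap (f := θ) (hy ▸ sameCycle_self_apply θ x), sup_glue, hθ'def]
  have hfaces : (SameCycle.setoid (σ * θ)).glue x y
      = (SameCycle.setoid (σ * θ')).glue x y := by
    rw [hθθ', ← mul_assoc, glue_setoid_mul_swap]
  by_cases hxy : (SameCycle.setoid σ ⊔ SameCycle.setoid θ') x y
  · -- the edge `{x, y}` joins a component to itself, adding at most one face
    have h₁ := card_quotient_le_card_quotient_glue_add_one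
      (r := SameCycle.setoid (σ * θ)) (x := x) (y := y)
    have h₂ := card_quotient_glue_le (r := SameCycle.setoid (σ * θ')) (x := x) (y := y)
    rw [hfaces] at h₁
    rw [hcomp, glue_eq_self hxy]
    omega
  · -- the edge `{x, y}` joins two components, merging the two faces at its ends
    have hnot : ¬ (σ * θ').SameCycle x y := fun h => hxy (setoid_mul_le_sup h)
    have hmerge : (σ * θ).SameCycle x y := by
      rw [hθθ', ← mul_assoc]
      exact sameCycle_mul_swap hnot
    have h₁ := card_quotient_glue hxy
    have h₂ := card_quotient_glue (r := SameCycle.setoid (σ * θ')) hnot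
    rw [← hfaces, glue_eq_self hmerge] at h₂
    rw [hcomp]
    omega
termination_by θ.support.card
decreasing_by omega

end Equiv.Perm

namespace PlanarGraph

open Equiv Equiv.Perm

variable {G : PlanarGraph}

section Rotation

variable (G) in
def revPerm : Perm G.A := Function.Involutive.toPerm G.rev G.rev_rev

@[simp]
theorem revPerm_apply (e : G.A) : G.revPerm e = G.rev e := rfl

theorem head_rev (e : G.A) : G.head (G.rev e) = G.tail e := by
  rw [← G.tail_rev, G.rev_rev]

theorem right_rev (e : G.A) : G.right (G.rev e) = G.left e := by
  rw [right, G.rev_rev]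

theorem left_rot (e : G.A) : G.left (G.rot e) = G.right e := by
  have h := G.left_faceNext (G.rev e)
  rwa [G.rev_rev] at h

theorem incident_tail_left (e : G.A) : G.Incident (G.tail e) (G.left e) := ⟨e, rfl, rfl⟩

theorem incident_head_left (e : G.A) : G.Incident (G.head e) (G.left e) :=
  ⟨G.rot (G.rev e), by rw [G.tail_rot, G.tail_rev], G.left_faceNext e⟩

theorem incident_head_of_dualIncident {b : G.A} {φ : G.F} (h : G.DualIncident b φ) :
    G.Incident (G.head b) φ := by
  rcases h with rfl | rfl
  · exact incident_head_left b
  · exact ⟨G.rev b, G.tail_rev b, rfl⟩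

theorem setoid_rot_mul_revPerm : SameCycle.setoid (G.rot * G.revPerm) = Setoid.ker G.left := by
  refine le_antisymm (SameCycle.setoid_le fun e => (G.left_faceNext e).symm) fun e e' h => ?_
  obtain ⟨n, hn⟩ := G.face_orbit e e' h
  exact ⟨n, by rw [zpow_natCast, coe_pow]; exact hn⟩

theorem setoid_rot_le_ker_tail : SameCycle.setoid G.rot ≤ Setoid.ker G.tail :=
  SameCycle.setoid_le fun e => (G.tail_rot e).symm

theorem tail_surjective (e : G.A) : Function.Surjective G.tail := fun u => by
  rcases (G.connected u (G.tail e)).cases_head with h | ⟨_, ⟨a, ha, -⟩, -⟩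
  exacts [⟨e, h.symm⟩, ⟨a, ha⟩]

theorem sup_setoid_eq_top_of_isDualWalk {s : Set G.A} {root : G.F}
    (hconn : ∀ φ, ∃ p, G.IsDualWalk s p root φ) :
    SameCycle.setoid G.rot ⊔ SameCycle.setoid G.revPerm = ⊤ := by
  set R := SameCycle.setoid G.rot ⊔ SameCycle.setoid G.revPerm
  have hface : Setoid.ker G.left ≤ R := setoid_rot_mul_revPerm ▸ setoid_mul_le_sup
  have hwalk : ∀ p φ ψ, G.IsDualWalk s p φ ψ → ∀ e e', G.left e = φ → G.left e' = ψ → R e e' := by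
    intro p
    induction p with
    | nil => rintro φ ψ rfl e e' rfl he'; exact hface he'.symm
    | cons b p ih =>
      rintro φ ψ ⟨-, rfl, hp⟩ e e' he he'
      exact R.trans' (R.trans' (hface he) ((le_sup_right : _ ≤ R) (sameCycle_self_apply _ b)))
        (ih _ ψ hp _ e' rfl he')
  obtain ⟨e₀, he₀⟩ := G.left_surjective root
  refine Setoid.eq_top_iff.2 fun e e' => ?_
  obtain ⟨p, hp⟩ := hconn (G.left e)
  obtain ⟨p', hp'⟩ := hconn (G.left e')
  exact R.trans' (R.symm' (hwalk p _ _ hp e₀ e he₀ rfl)) (hwalk p' _ _ hp' e₀ e' he₀ rfl)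

/-- The genus inequality and Euler's formula bound the number of rotation cycles by `|V|`. -/
theorem sameCycle_rot_of_tail_eq {s : Set G.A} {root : G.F}
    (hconn : ∀ φ, ∃ p, G.IsDualWalk s p root φ) {e e' : G.A} (h : G.tail e = G.tail e') :
    G.rot.SameCycle e e' := by
  have hgenus := genus_inequality G.rot G.revPerm (Equiv.ext fun e => G.rev_rev e)
  have hsupp : G.revPerm.support = Finset.univ :=
    Finset.eq_univ_of_forall fun e => mem_support.2 (G.rev_ne e)
  have hone : Nat.card (Quotient (⊤ : Setoid G.A)) = 1 :=
    Nat.card_eq_one_iff_unique.2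
      ⟨⟨fun q q' => Quotient.inductionOn₂ q q' fun _ _ => Quotient.sound trivial⟩, ⟨⟦e⟧⟩⟩
  rw [sup_setoid_eq_top_of_isDualWalk hconn, setoid_rot_mul_revPerm, hsupp, Finset.card_univ,
    Nat.card_congr (Setoid.quotientKerEquivOfSurjective _ G.left_surjective),
    hone] at hgenus
  have heuler := G.euler
  have hcard : Nat.card (Quotient (SameCycle.setoid G.rot)) ≤
      Nat.card (Quotient (Setoid.ker G.tail)) := by
    rw [Nat.card_congr (Setoid.quotientKerEquivOfSurjective _ (tail_surjective e))]
    simp only [Nat.card_eq_fintype_card] at hgenus ⊢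
    omega
  have hsurj : Function.Surjective (Setoid.map_of_le (setoid_rot_le_ker_tail (G := G))) :=
    fun q => Quotient.inductionOn q fun e => ⟨⟦e⟧, rfl⟩
  exact Quotient.exact ((hsurj.bijective_of_nat_card_le hcard).1 (Quotient.sound h))

end Rotation

theorem isWalk_append_iff {p q : List G.A} {u w : G.V} :
    G.IsWalk (p ++ q) u w ↔ ∃ z, G.IsWalk p u z ∧ G.IsWalk q z w := by
  induction p generalizing u with
  | nil => simp [IsWalk]
  | cons a p ih => simp only [IsWalk, List.cons_append, ih, and_assoc, exists_and_left]

theorem isWalk_singleton (a : G.A) : G.IsWalk [a] (G.tail a) (G.head a) := ⟨rfl, rfl⟩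

theorem isWalk_append_cons_iff {p q : List G.A} {g : G.A} {u w : G.V} :
    G.IsWalk (p ++ g :: q) u w ↔ G.IsWalk p u (G.tail g) ∧ G.IsWalk q (G.head g) w := by
  simp only [isWalk_append_iff, IsWalk]
  exact ⟨fun ⟨_, hp, rfl, hq⟩ => ⟨hp, hq⟩, fun ⟨hp, hq⟩ => ⟨_, hp, rfl, hq⟩⟩

theorem walkLen_append (len : G.A → ℝ) (p q : List G.A) :
    G.walkLen len (p ++ q) = G.walkLen len p + G.walkLen len q := by
  simp [walkLen]

theorem walkLen_cons (len : G.A → ℝ) (a : G.A) (p : List G.A) :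
    G.walkLen len (a :: p) = len a + G.walkLen len p := by
  simp [walkLen]

theorem walkLen_singleton (len : G.A → ℝ) (a : G.A) : G.walkLen len [a] = len a := by
  simp [walkLen]

section ShortestPaths

variable {len : G.A → ℝ} {d : G.V → G.V → ℝ}

theorem IsSPDist.le_walkLen (hd : G.IsSPDist len d) {p : List G.A} {u w : G.V}
    (hp : G.IsWalk p u w) : d u w ≤ G.walkLen len p :=
  (hd u w).2 p hp

theorem IsSPDist.triangle (hd : G.IsSPDist len d) (u z w : G.V) : d u w ≤ d u z + d z w := by
  obtain ⟨p, hp, hpd⟩ := (hd u z).1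
  obtain ⟨q, hq, hqd⟩ := (hd z w).1
  rw [← hpd, ← hqd, ← walkLen_append]
  exact hd.le_walkLen (isWalk_append_iff.2 ⟨z, hp, hq⟩)

theorem mem_vorCell_of_walk (hd : G.IsSPDist len d) {S : Set G.V} {ω : G.V → ℝ} {v u w : G.V}
    (hw : w ∈ G.VorCell d S ω v) {p₁ p₂ : List G.A} (hp₁ : G.IsWalk p₁ v u)
    (hp₂ : G.IsWalk p₂ u w) (hlen : G.walkLen len p₁ + G.walkLen len p₂ = d v w) :
    u ∈ G.VorCell d S ω v := by
  refine ⟨hw.1, fun s hs hsv => ?_⟩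
  have := hw.2 s hs hsv
  have := hd.le_walkLen hp₁
  have := hd.le_walkLen hp₂
  have := hd.triangle s u w
  linarith

variable {v : G.V} {P : G.V → List G.A}
  (hP : ∀ w, G.IsWalk (P w) v w ∧ G.walkLen len (P w) = d v w)
include hP

theorem ends_mem_vorCell (hd : G.IsSPDist len d) {S : Set G.V} {ω : G.V → ℝ} {g : G.A}
    {w : G.V} (hg : g ∈ P w) (hw : w ∈ G.VorCell d S ω v) :
    G.tail g ∈ G.VorCell d S ω v ∧ G.head g ∈ G.VorCell d S ω v := by
  obtain ⟨p₁, p₂, hsplit⟩ := List.append_of_mem hg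
  have hwalk := (hP w).1
  have hlen := (hP w).2
  rw [hsplit] at hwalk hlen
  obtain ⟨hp₁, hp₂⟩ := isWalk_append_cons_iff.1 hwalk
  rw [walkLen_append, walkLen_cons] at hlen
  constructor
  · refine mem_vorCell_of_walk hd hw hp₁ (isWalk_append_iff.2 ⟨_, isWalk_singleton g, hp₂⟩) ?_
    rw [walkLen_append, walkLen_singleton]
    linarith
  · refine mem_vorCell_of_walk hd hw (isWalk_append_iff.2 ⟨_, hp₁, isWalk_singleton g⟩) hp₂ ?_
    rw [walkLen_append, walkLen_singleton]
    linarith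

theorem notMem_path_tail (hd : G.IsSPDist len d) (hup : G.UniqueShortestPaths len d)
    (g : G.A) : g ∉ P (G.tail g) := by
  intro hmem
  obtain ⟨p₁, p₂, hsplit⟩ := List.append_of_mem hmem
  have hwalk := (hP (G.tail g)).1
  have hlen := (hP (G.tail g)).2
  rw [hsplit] at hwalk hlen
  obtain ⟨hp₁, hp₂⟩ := isWalk_append_cons_iff.1 hwalk
  rw [walkLen_append, walkLen_cons] at hlen
  -- `g :: p₂` is a closed walk of length `0`, so going around it once more is also shortest
  have hloop : P (G.tail g) ++ [g] ++ p₂ = P (G.tail g) := by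
    have hwalk' :=
      isWalk_append_iff.2 ⟨_, isWalk_append_iff.2 ⟨_, (hP _).1, isWalk_singleton g⟩, hp₂⟩
    refine hup _ _ _ _ hwalk' (hP _).1 ?_ (hP _).2
    have h₁ := hd.le_walkLen hp₁
    have h₂ := hd.le_walkLen hwalk'
    rw [walkLen_append, walkLen_append, walkLen_singleton, (hP _).2] at h₂ ⊢
    linarith
  simpa using congrArg List.length hloop

theorem IsSPTree.path_head {T : Set G.A} (hup : G.UniqueShortestPaths len d)
    (hT : G.IsSPTree len d v T) {g : G.A} (hg : g ∈ T) : P (G.head g) = P (G.tail g) ++ [g] :=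
  hup _ _ _ _ (hP _).1 (isWalk_append_iff.2 ⟨_, (hP _).1, isWalk_singleton g⟩) (hP _).2
    (by rw [walkLen_append, (hP _).2, walkLen_singleton, hT.1 g hg])

end ShortestPaths

section Cotree

variable {s : Set G.A}

theorem isDualWalk_append_iff {p q : List G.A} {φ ψ : G.F} :
    G.IsDualWalk s (p ++ q) φ ψ ↔ ∃ χ, G.IsDualWalk s p φ χ ∧ G.IsDualWalk s q χ ψ := by
  induction p generalizing φ with
  | nil => simp [IsDualWalk]
  | cons a p ih =>
    simp only [IsDualWalk, List.cons_append, ih, and_assoc, exists_and_left]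

theorem isDualWalk_append_singleton_iff {p : List G.A} {b : G.A} {φ ψ : G.F} :
    G.IsDualWalk s (p ++ [b]) φ ψ ↔
      G.IsDualWalk s p φ (G.dualTail b) ∧ b ∈ s ∧ G.dualHead b = ψ := by
  simp only [isDualWalk_append_iff, IsDualWalk]
  exact ⟨fun ⟨_, hp, hb, rfl, h⟩ => ⟨hp, hb, h⟩, fun ⟨hp, hb, h⟩ => ⟨_, hp, hb, rfl, h⟩⟩

variable {T Tstar : Set G.A} {root : G.F}

theorem IsCotree.eq_of_isDualWalk (hTstar : G.IsCotree T Tstar root) {p q : List G.A} {φ : G.F}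
    (hp : G.IsDualWalk Tstar p root φ) (hq : G.IsDualWalk Tstar q root φ) : p = q := by
  induction p using List.reverseRecOn generalizing q φ with
  | nil =>
    rcases q.eq_nil_or_concat' with rfl | ⟨q, b, rfl⟩
    · rfl
    obtain ⟨-, hb, hbφ⟩ := isDualWalk_append_singleton_iff.1 hq
    exact absurd (hbφ.trans (hp : root = φ).symm) (hTstar.2.2.2.2.1 b hb)
  | append_singleton p b ih =>
    obtain ⟨hp', hb, rfl⟩ := isDualWalk_append_singleton_iff.1 hp
    rcases q.eq_nil_or_concat' with rfl | ⟨q, b', rfl⟩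
    · exact absurd (hq : root = _).symm (hTstar.2.2.2.2.1 b hb)
    obtain ⟨hq', hb', hb'b⟩ := isDualWalk_append_singleton_iff.1 hq
    obtain ⟨_, -, hparent⟩ := hTstar.2.2.2.1 _ (hTstar.2.2.2.2.1 b hb)
    obtain rfl : b' = b := (hparent b' ⟨hb', hb'b⟩).trans (hparent b ⟨hb, rfl⟩).symm
    rw [ih hp' hq']

variable {W : G.F → List G.A} (hTstar : G.IsCotree T Tstar root)
  (hW : ∀ φ, G.IsDualWalk Tstar (W φ) root φ)
include hTstar hW

theorem IsCotree.path_dualHead {b : G.A} (hb : b ∈ Tstar) :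
    W (G.dualHead b) = W (G.dualTail b) ++ [b] :=
  hTstar.eq_of_isDualWalk (hW _) ((isDualWalk_append_singleton_iff (b := b)).2 ⟨hW _, hb, rfl⟩)

end Cotree

section Crossing

def Crosses (X : Set G.F) (e : G.A) : Prop := ¬ (G.left e ∈ X ↔ G.right e ∈ X)

theorem crosses_rev {X : Set G.F} {e : G.A} : G.Crosses X (G.rev e) ↔ G.Crosses X e := by
  simp only [Crosses, right_rev]
  exact not_congr Iff.comm

section CutSums

variable {M : Type*} (f : G.F → M)

theorem sum_left_eq_sum_right_of_rot [AddCommMonoid M] {p : G.A → Prop} [DecidablePred p]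
    (hp : ∀ e, p (G.rot e) ↔ p e) :
    ∑ e with p e, f (G.left e) = ∑ e with p e, f (G.right e) := by
  simp only [Finset.sum_filter]
  rw [← Equiv.sum_comp G.rot]
  simp only [hp, left_rot]

theorem sum_left_eq_sum_right_of_rev [AddCommMonoid M] {p : G.A → Prop} [DecidablePred p]
    (hp : ∀ e, p (G.rev e) ↔ p e) :
    ∑ e with p e, f (G.left e) = ∑ e with p e, f (G.right e) := by
  simp only [Finset.sum_filter]
  rw [← Equiv.sum_comp G.revPerm]
  simp only [revPerm_apply, hp]
  rfl

/-- Around each vertex the terms telescope along the rotation, and the arcs with both ends in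
`U` cancel against their reverses. -/
theorem sum_coboundary_cut [AddCommGroup M] (U : Set G.V) :
    ∑ e with G.tail e ∈ U ∧ G.head e ∉ U, (f (G.left e) - f (G.right e)) = 0 := by
  have hstar : ∑ e with G.tail e ∈ U, (f (G.left e) - f (G.right e)) = 0 := by
    rw [Finset.sum_sub_distrib, sum_left_eq_sum_right_of_rot f fun e => by rw [G.tail_rot],
      sub_self]
  have hinner : ∑ e with G.tail e ∈ U ∧ G.head e ∈ U, (f (G.left e) - f (G.right e)) = 0 := by
    rw [Finset.sum_sub_distrib, sum_left_eq_sum_right_of_rev f fun e => by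
      rw [G.tail_rev, head_rev, and_comm], sub_self]
  rw [← Finset.sum_filter_add_sum_filter_not _ (fun e => G.head e ∈ U), Finset.filter_filter,
    Finset.filter_filter, hinner, zero_add] at hstar
  exact hstar

end CutSums

variable {T : Set G.A} {P : G.V → List G.A} {X : Set G.F} {a : G.A}

/-- Of the arcs leaving the subtree `{u | g ∈ P u}` only `rev g` can cross `X`, so by
`sum_coboundary_cut` it does not. -/
theorem not_crosses_of_notMem_path (hTP : ∀ g ∈ T, P (G.head g) = P (G.tail g) ++ [g])
    (hPtail : ∀ g, g ∉ P (G.tail g))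
    (hX : ∀ e, G.Crosses X e → e ∈ T ∨ G.rev e ∈ T ∨ e = a ∨ e = G.rev a)
    {g : G.A} (hg : g ∈ T) (hta : g ∉ P (G.tail a)) (hha : g ∉ P (G.head a)) :
    ¬ G.Crosses X g := by
  let f : G.F → ℤ := fun φ => if φ ∈ X then 1 else 0
  have hf : ∀ e, f (G.left e) - f (G.right e) = 0 ↔ ¬ G.Crosses X e := fun e => by
    simp only [f, Crosses, not_not]
    split_ifs <;> simp_all
  have hcut := sum_coboundary_cut f {u | g ∈ P u}
  rw [Finset.sum_eq_single (G.rev g)] at hcut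
  · rwa [hf, crosses_rev] at hcut
  · intro e he hne
    simp only [Finset.mem_filter, Finset.mem_univ, true_and, Set.mem_ofPred_eq] at he
    refine (hf e).2 fun hc => ?_
    rcases hX e hc with heT | hreT | rfl | rfl
    · exact he.2 (by rw [hTP e heT]; exact List.mem_append_left _ he.1)
    · have := he.1
      rw [← head_rev e, hTP _ hreT, G.tail_rev, List.mem_append, List.mem_singleton] at this
      rcases this with h | rfl
      · exact he.2 h
      · exact hne (G.rev_rev _).symm
    · exact hta he.1
    · exact hha (by simpa only [G.tail_rev] using he.1)
  · intro hnot
    simp only [Finset.mem_filter, Finset.mem_univ, true_and, Set.mem_ofPred_eq, G.tail_rev,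
      head_rev, hTP g hg] at hnot
    exact (hnot ⟨List.mem_append_right _ (List.mem_singleton_self g), hPtail g⟩).elim

theorem tail_mem_of_crosses {Vor : Set G.V} (hTP : ∀ g ∈ T, P (G.head g) = P (G.tail g) ++ [g])
    (hPtail : ∀ g, g ∉ P (G.tail g))
    (hX : ∀ e, G.Crosses X e → e ∈ T ∨ G.rev e ∈ T ∨ e = a ∨ e = G.rev a)
    (hVor : ∀ g w, g ∈ P w → w ∈ Vor → G.tail g ∈ Vor ∧ G.head g ∈ Vor)
    (hta : G.tail a ∈ Vor) (hha : G.head a ∈ Vor) {e : G.A} (he : G.Crosses X e) :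
    G.tail e ∈ Vor := by
  by_contra hne
  rcases hX e he with heT | hreT | rfl | rfl
  · exact not_crosses_of_notMem_path hTP hPtail hX heT (fun h => hne (hVor _ _ h hta).1)
      (fun h => hne (hVor _ _ h hha).1) he
  · refine not_crosses_of_notMem_path hTP hPtail hX hreT (fun h => hne ?_) (fun h => hne ?_)
      (crosses_rev.2 he)
    · simpa only [head_rev] using (hVor _ _ h hta).2
    · simpa only [head_rev] using (hVor _ _ h hha).2
  · exact hne hta
  · exact hne (by rwa [G.tail_rev])

theorem IsCotree.crosses_subtree {Tstar : Set G.A} {root : G.F} {W : G.F → List G.A}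
    (hTstar : G.IsCotree T Tstar root) (hW : ∀ φ, G.IsDualWalk Tstar (W φ) root φ) (e : G.A)
    (he : G.Crosses {φ | a ∈ W φ} e) : e ∈ T ∨ G.rev e ∈ T ∨ e = a ∨ e = G.rev a := by
  have hside : ∀ b ∈ Tstar, b ≠ a → ¬ G.Crosses {φ | a ∈ W φ} b := fun b hb hba => by
    simp only [Crosses, Set.mem_ofPred_eq, not_not]
    rw [← dualTail, ← dualHead, hTstar.path_dualHead hW hb, List.mem_append, List.mem_singleton,
      or_iff_left (Ne.symm hba)]
  by_contra! h
  rcases hTstar.2.2.1 e h.1 h.2.1 with heT | hreT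
  · exact hside e heT h.2.2.1 he
  · exact hside _ hreT (fun hra => h.2.2.2 (by rw [← hra, G.rev_rev])) (crosses_rev.2 he)

end Crossing

section Sides

variable {s : Set G.A} {root : G.F} {X : Set G.F}

theorem mem_iff_of_incident (hconn : ∀ φ, ∃ p, G.IsDualWalk s p root φ) {u : G.V}
    (hu : ∀ e, G.tail e = u → ¬ G.Crosses X e) {φ ψ : G.F} (hφ : G.Incident u φ)
    (hψ : G.Incident u ψ) : φ ∈ X ↔ ψ ∈ X := by
  obtain ⟨e, rfl, rfl⟩ := hφ
  obtain ⟨e', he', rfl⟩ := hψ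
  obtain ⟨n, -, rfl⟩ := (sameCycle_rot_of_tail_eq hconn he'.symm).exists_pow_eq'
  clear he'
  induction n with
  | zero => rfl
  | succ n ih =>
    have htail : G.tail ((G.rot ^ n) e) = G.tail e :=
      (setoid_rot_le_ker_tail (sameCycle_pow_right.2 (SameCycle.refl _ e))).symm
    rw [pow_succ', mul_apply, left_rot]
    exact ih.trans (not_not.1 (hu _ htail))

theorem mem_iff_of_mem_comp (hconn : ∀ φ, ∃ p, G.IsDualWalk s p root φ) {Vor K : Set G.V}
    (hX : ∀ e, G.Crosses X e → G.tail e ∈ Vor) (hK : G.IsCompOfComplement Vor K) {u w : G.V}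
    (hu : u ∈ K) (hw : w ∈ K) {φ ψ : G.F} (hφ : G.Incident u φ) (hψ : G.Incident w ψ) :
    φ ∈ X ↔ ψ ∈ X := by
  obtain ⟨x, hx, rfl⟩ := hK
  set r : G.V → G.V → Prop := fun p q => p ∉ Vor ∧ q ∉ Vor ∧ ∃ a, G.tail a = p ∧ G.head a = q
  have : Std.Symm r := ⟨fun p q ⟨hp, hq, a, ha, ha'⟩ =>
    ⟨hq, hp, G.rev a, by rw [G.tail_rev, ha'], by rw [head_rev, ha]⟩⟩
  have hloc : ∀ {p}, p ∉ Vor → ∀ {φ ψ}, G.Incident p φ → G.Incident p ψ → (φ ∈ X ↔ ψ ∈ X) :=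
    fun hp => mem_iff_of_incident hconn fun e he hc => hp (by rw [← he]; exact hX e hc)
  have hux : u ∉ Vor := by
    rcases (hu : Relation.ReflTransGen r x u).cases_tail with rfl | ⟨_, -, -, hu', -⟩
    exacts [hx, hu']
  have huw : Relation.ReflTransGen r u w := (Std.Symm.symm _ _ hu).trans hw
  clear hu hw
  induction huw generalizing ψ with
  | refl => exact hloc hux hφ hψ
  | tail _ hpq ih =>
    obtain ⟨-, hq, e, rfl, rfl⟩ := hpq
    exact (ih (incident_tail_left e)).trans (hloc hq (incident_head_left e) hψ)

end Sides

end PlanarGraph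

open PlanarGraph in
theorem exiting_edge_on_cotree_path_to_hole_general
    (G : PlanarGraph) (len : G.A → ℝ) (d : G.V → G.V → ℝ)
    (hd : G.IsSPDist len d)
    (hup : G.UniqueShortestPaths len d)
    (S : Set G.V) (ω : G.V → ℝ)
    (v : G.V)
    (hinf : G.F)
    (Vor : Set G.V) (hVor : Vor = G.VorCell d S ω v)
    (T : Set G.A) (hT : G.IsSPTree len d v T)
    (Tstar : Set G.A) (hTstar : G.IsCotree T Tstar hinf)
    (h : G.F)
    (K : Set G.V) (hK : G.IsCompOfComplement Vor K)
    (C : Set G.A) (hC : C = G.boundaryCycle Vor K)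
    (henc : ∃ w : G.V, G.Incident w h ∧ w ∈ K) :
    ∃ p : List G.A, G.IsDualWalk Tstar p hinf h ∧
      ∀ a : G.A, a ∈ Tstar → G.ExitsAt Vor C a → a ∈ p := by
  subst hVor hC
  choose P hP using fun w => (hd v w).1
  choose W hW using hTstar.2.2.2.2.2
  refine ⟨W h, hW h, fun a ha ⟨hleft, _, b, ⟨_, hbK⟩, hb⟩ => ?_⟩
  obtain ⟨w, hwh, hwK⟩ := henc
  have hcross : ∀ e, G.Crosses {φ | a ∈ W φ} e → G.tail e ∈ G.VorCell d S ω v :=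
    fun e => tail_mem_of_crosses (fun _ => hT.path_head hP hup) (notMem_path_tail hP hd hup)
      (hTstar.crosses_subtree hW) (fun _ _ hg => ends_mem_vorCell hP hd hg)
      (hleft _ (incident_tail_left a)) (hleft _ (incident_head_left a))
  have hhead : a ∈ W (G.dualHead a) := by simp [hTstar.path_dualHead hW ha]
  exact (mem_iff_of_mem_comp hTstar.2.2.2.2.2 hcross hK hbK hwK
    (incident_head_of_dualIncident hb) hwh).1 hhead

/-- Let `h ≠ h∞` be a hole, and suppose there is a boundary cycle `C*` of
`Vor*(v)` other than `C*₀` that either strictly encloses `h*` or passes through `h*`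
(equivalently, some vertex of `h` lies in the complement component `K` cut off by `C*`).
Then the unique edge of the cotree `T*` that exits `Vor*(v)` at `C*` lies on the path from
`h∞*` to `h*` in `T*`. -/
theorem exiting_edge_on_cotree_path_to_hole
    (G : PlanarGraph) (len : G.A → ℝ) (d : G.V → G.V → ℝ)
    (hd : G.IsSPDist len d) (hneg : G.NoNegCycle len)
    (hup : G.UniqueShortestPaths len d) (hgen : G.GenericDistances d)
    (Holes : Set G.F) (S : Set G.V) (ω : G.V → ℝ)
    (hS : ∀ s ∈ S, ∃ h ∈ Holes, G.Incident s h)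
    (hpart : ∀ w : G.V, ∃ s ∈ S, w ∈ G.VorCell d S ω s)
    (v : G.V) (hv : v ∈ S)
    (hinf : G.F) (hinfH : hinf ∈ Holes) (hvinf : G.Incident v hinf)
    (Vor : Set G.V) (hVor : Vor = G.VorCell d S ω v)
    (T : Set G.A) (hT : G.IsSPTree len d v T)
    (Tstar : Set G.A) (hTstar : G.IsCotree T Tstar hinf)
    (C₀ : Set G.A) (hC₀ : C₀ ∈ G.boundaryCycles Vor)
    (hC₀inf : ∃ a ∈ C₀, G.DualIncident a hinf)
    (hC₀uniq : ∀ C ∈ G.boundaryCycles Vor,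
      (∃ a ∈ C, G.DualIncident a hinf) → C = C₀)
    (h : G.F) (hhH : h ∈ Holes) (hne : h ≠ hinf)
    (K : Set G.V) (hK : G.IsCompOfComplement Vor K)
    (C : Set G.A) (hC : C = G.boundaryCycle Vor K) (hCC0 : C ≠ C₀)
    (henc : ∃ w : G.V, G.Incident w h ∧ w ∈ K) :
    ∃ p : List G.A, G.IsDualWalk Tstar p hinf h ∧
      ∀ a : G.A, a ∈ Tstar → G.ExitsAt Vor C a → a ∈ p :=
  exiting_edge_on_cotree_path_to_hole_general G len d hd hup S ω v hinf Vor hVor T hT Tstar hTstar h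
    K hK C hC henc
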